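/- arXiv:2403.03033 — 6 statements merged into one kernel-verified Lean document; each statement's English description precedes it below -/
import Mathlib

section
/- Let d ≥ 1, ℓ ∈ ℝ, let D ⊆ ℝ^d be compact, and let g, p : ℝ^d → ℝ be continuous. Let H : D × [0,1] → D be continuous, with H(·,t) a homeomorphism of D onto D for each t ∈ [0,1], H(·,0) the identity on D, and H({g = ℓ} ∩ D, t) = {g + tp = ℓ} ∩ D for every t ∈ [0,1]. Assume {g = ℓ} ∩ D has at most finitely many connected components. If A and A′ are connected components of {g = ℓ} ∩ D such that H(A,t) ∩ H(A′,s) ≠ ∅ for some t, s ∈ [0,1], then A = A′. -/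
open MeasureTheory Filter Set Topology Metric
open scoped ENNReal NNReal

noncomputable section

/-- `ℝ^d` as Euclidean space. -/
abbrev Euc (d : ℕ) := EuclideanSpace ℝ (Fin d)

/-- The closed unit cube `B_v = v + [0,1]^d`. -/
def unitCube (d : ℕ) (v : Fin d → ℤ) : Set (Euc d) :=
  {x | ∀ i, (v i : ℝ) ≤ x i ∧ x i ≤ (v i : ℝ) + 1}

/-- The open face of the cube `B_v` described by `s`: `some false ↦ {v i}`,
`some true ↦ {v i + 1}`, `none ↦ (v i, v i + 1)`. -/
def openFace (d : ℕ) (v : Fin d → ℤ) (s : Fin d → Option Bool) : Set (Euc d) :=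
  {x | ∀ i, match s i with
    | some false => x i = (v i : ℝ)
    | some true => x i = (v i : ℝ) + 1
    | none => (v i : ℝ) < x i ∧ x i < (v i : ℝ) + 1}

/-- `x` is a stratified critical point of `h` in the cube `B_v` at level `ℓ`. -/
def IsStratCrit (d : ℕ) (h : Euc d → ℝ) (v : Fin d → ℤ) (ℓ : ℝ) (x : Euc d) : Prop :=
  ∃ s : Fin d → Option Bool, x ∈ openFace d v s ∧ h x = ℓ ∧
    ∀ i, s i = none → fderiv ℝ h x (EuclideanSpace.single i 1) = 0

/-- `(g,p)` is locally topologically stable on `B_v` at level `ℓ`. -/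
def LocStable (d : ℕ) (g p : Euc d → ℝ) (v : Fin d → ℤ) (ℓ : ℝ) : Prop :=
  ∀ t ∈ Set.Icc (0:ℝ) 1, ∀ x : Euc d, ¬ IsStratCrit d (fun y => g y + t * p y) v ℓ x

/-- Union of the unbounded connected components of `A`. -/
def unboundedPart (d : ℕ) (A : Set (Euc d)) : Set (Euc d) :=
  {x | x ∈ A ∧ ¬ Bornology.IsBounded (connectedComponentIn A x)}

/-- Union of the bounded connected components of `A`. -/
def boundedPart (d : ℕ) (A : Set (Euc d)) : Set (Euc d) :=
  A \ unboundedPart d A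

/-- The locally unstable set `U_Loc(g,p)` at level `ℓ`. -/
def ULoc (d : ℕ) (g p : Euc d → ℝ) (ℓ : ℝ) : Set (Fin d → ℤ) :=
  {w | ¬ LocStable d g p w ℓ}

/-- The finite-range unstable set `U_FR(g,p)` at level `ℓ`. -/
def UFR (d : ℕ) (g p : Euc d → ℝ) (ℓ : ℝ) : Set (Fin d → ℤ) :=
  ULoc d g p ℓ ∪
    {w | ∃ u ∈ ULoc d g p ℓ,
      (∃ x ∈ unitCube d w, ∃ y ∈ unitCube d u,
        JoinedIn (boundedPart d {z | ℓ ≤ g z}) x y) ∨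
      (∃ x ∈ unitCube d w, ∃ y ∈ unitCube d u,
        JoinedIn (boundedPart d {z | ℓ ≤ g z + p z}) x y)}

/-- `A` has at most finitely many connected components. -/
def FinitelyManyComponents (d : ℕ) (A : Set (Euc d)) : Prop :=
  {C : Set (Euc d) | ∃ x ∈ A, C = connectedComponentIn A x}.Finite

/-- `H` is a stratified isotopy of the union `D` of the cubes `B_{v i}`:
it is continuous on `D × [0,1]`, each time slice is a homeomorphism of `D`
onto itself, and each stratum (open face) is preserved at every time. -/
def IsStratIsotopy (d n : ℕ) (v : Fin n → Fin d → ℤ) (H : Euc d → ℝ → Euc d) : Prop :=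
  ContinuousOn (fun q : Euc d × ℝ => H q.1 q.2) ((⋃ i, unitCube d (v i)) ×ˢ Set.Icc 0 1) ∧
  (∀ t ∈ Set.Icc (0:ℝ) 1,
    ∃ e : (⋃ i, unitCube d (v i)) ≃ₜ (⋃ i, unitCube d (v i)),
      ∀ x : (⋃ i, unitCube d (v i)), (e x : Euc d) = H x t) ∧
  (∀ t ∈ Set.Icc (0:ℝ) 1, ∀ i : Fin n, ∀ s : Fin d → Option Bool,
    (fun x => H x t) '' openFace d (v i) s = openFace d (v i) s)

/-- The cube `Λ_r = [-r,r]^d`. -/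
def bigCube (d : ℕ) (r : ℝ) : Set (Euc d) :=
  {x | ∀ i, |x i| ≤ r}

/-- If an isotopy `H` of the compact set `D` carries the level set
`{g = ℓ} ∩ D` onto `{g + tp = ℓ} ∩ D` for each `t`, and `A`, `A'` are connected
components of `{g = ℓ} ∩ D` whose images under `H(·,t)` and `H(·,s)` intersect,
then `A = A'`. -/
theorem statement_3 (d : ℕ) (hd : 1 ≤ d) (ℓ : ℝ)
    (D : Set (Euc d)) (hD : IsCompact D)
    (g p : Euc d → ℝ) (hg : Continuous g) (hp : Continuous p)
    (H : Euc d → ℝ → Euc d)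
    (Hcont : ContinuousOn (fun q : Euc d × ℝ => H q.1 q.2) (D ×ˢ Set.Icc 0 1))
    (Hhomeo : ∀ t ∈ Set.Icc (0:ℝ) 1, ∃ e : D ≃ₜ D, ∀ x : D, (e x : Euc d) = H x t)
    (Hid : ∀ x ∈ D, H x 0 = x)
    (Hlevel : ∀ t ∈ Set.Icc (0:ℝ) 1,
      (fun x => H x t) '' ({x | g x = ℓ} ∩ D) = {x | g x + t * p x = ℓ} ∩ D)
    (hfin : FinitelyManyComponents d ({x | g x = ℓ} ∩ D))
    (A A' : Set (Euc d))
    (hA : ∃ x ∈ {x | g x = ℓ} ∩ D, A = connectedComponentIn ({x | g x = ℓ} ∩ D) x)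
    (hA' : ∃ x ∈ {x | g x = ℓ} ∩ D, A' = connectedComponentIn ({x | g x = ℓ} ∩ D) x)
    (t s : ℝ) (ht : t ∈ Set.Icc (0:ℝ) 1) (hs : s ∈ Set.Icc (0:ℝ) 1)
    (hmeet : ((fun x => H x t) '' A ∩ (fun x => H x s) '' A').Nonempty) :
    A = A' :=  by
  set K := {x | g x = ℓ} ∩ D with hKdef
  obtain ⟨x, ⟨a, haA, hax⟩, ⟨a', ha'A', ha'x⟩⟩ := hmeet
  obtain ⟨x₀, hx₀K, hAdef⟩ := hA
  obtain ⟨x₀', hx₀'K, hA'def⟩ := hA'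
  have haK : a ∈ K := by rw [hAdef] at haA; exact connectedComponentIn_subset _ _ haA
  have ha'K : a' ∈ K := by rw [hA'def] at ha'A'; exact connectedComponentIn_subset _ _ ha'A'
  have haD : a ∈ D := haK.2
  have ha'D : a' ∈ D := ha'K.2
  have hAeq : connectedComponentIn K a = A := by
    rw [hAdef] at haA ⊢; exact (connectedComponentIn_eq haA).symm
  have hA'eq : connectedComponentIn K a' = A' := by
    rw [hA'def] at ha'A' ⊢; exact (connectedComponentIn_eq ha'A').symm
  have hinj : ∀ r ∈ Set.Icc (0:ℝ) 1, ∀ z ∈ D, ∀ z' ∈ D, H z r = H z' r → z = z' := by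
    intro r hr z hz z' hz' hzz
    obtain ⟨e, he⟩ := Hhomeo r hr
    have : e ⟨z, hz⟩ = e ⟨z', hz'⟩ := Subtype.ext (by rw [he, he]; exact hzz)
    exact congrArg Subtype.val (e.injective this)
  suffices hmem : a' ∈ connectedComponentIn K a by
    rw [← hAeq, ← hA'eq, connectedComponentIn_eq hmem]
  rcases eq_or_ne t s with rfl | hts
  · -- same time: use injectivity
    have : a = a' := hinj t ht a haD a' ha'D (hax.trans ha'x.symm)
    rw [← this]
    exact mem_connectedComponentIn haK
  · -- different times: the meeting point is a fixed level point
    have hxKt : x ∈ {z | g z + t * p z = ℓ} ∩ D := by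
      rw [← Hlevel t ht]; exact ⟨a, haK, hax⟩
    have hxKs : x ∈ {z | g z + s * p z = ℓ} ∩ D := by
      rw [← Hlevel s hs]; exact ⟨a', ha'K, ha'x⟩
    have hxD : x ∈ D := hxKt.2
    have h1 : g x + t * p x = ℓ := hxKt.1
    have h2 : g x + s * p x = ℓ := hxKs.1
    have px0 : p x = 0 := by
      rcases mul_eq_zero.mp (show (t - s) * p x = 0 by linear_combination h1 - h2) with h | h
      · exact absurd (sub_eq_zero.mp h) hts
      · exact h
    have gx : g x = ℓ := by rw [px0, mul_zero, add_zero] at h1; exact h1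
    -- set up the homeomorphism of D × Icc 0 1
    haveI : CompactSpace ↥D := isCompact_iff_compactSpace.mp hD
    have hmemD : ∀ z ∈ D, ∀ r ∈ Set.Icc (0:ℝ) 1, H z r ∈ D := by
      intro z hz r hr
      obtain ⟨e, he⟩ := Hhomeo r hr
      have := (e ⟨z, hz⟩).2
      rwa [he] at this
    set G : ↥D × ↥(Set.Icc (0:ℝ) 1) → ↥D :=
      fun q => ⟨H q.1 q.2, hmemD q.1 q.1.2 q.2 q.2.2⟩ with hGdef
    have hGcont : Continuous G := by
      refine Continuous.subtype_mk ?_ _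
      exact Hcont.comp_continuous
        ((continuous_subtype_val.comp continuous_fst).prodMk
          (continuous_subtype_val.comp continuous_snd))
        (fun q => ⟨q.1.2, q.2.2⟩)
    have hslice : ∀ r : ↥(Set.Icc (0:ℝ) 1),
        Function.Bijective (fun z : ↥D => G (z, r)) := by
      intro r
      obtain ⟨e, he⟩ := Hhomeo r r.2
      have heq : (fun z : ↥D => G (z, r)) = e := funext fun z => Subtype.ext (he z).symm
      rw [heq]; exact e.bijective
    have hFbij : Function.Bijective
        (fun q : ↥D × ↥(Set.Icc (0:ℝ) 1) => (G q, q.2)) := by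
      constructor
      · rintro ⟨z, r⟩ ⟨z', r'⟩ h
        have hr : r = r' := congrArg Prod.snd h
        subst hr
        have hz : z = z' := (hslice r).1 (congrArg Prod.fst h)
        rw [hz]
      · rintro ⟨w, r⟩
        obtain ⟨z, hz⟩ := (hslice r).2 w
        exact ⟨(z, r), Prod.ext hz rfl⟩
    have hFc : Continuous (Equiv.ofBijective _ hFbij) := hGcont.prodMk continuous_snd
    set F := hFc.homeoOfEquivCompactToT2 with hFdef
    set y : ↥(Set.Icc (0:ℝ) 1) → ↥D := fun r => (F.symm (⟨x, hxD⟩, r)).1 with hydef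
    have hyH : ∀ r : ↥(Set.Icc (0:ℝ) 1), H (y r) (r : ℝ) = x := by
      intro r
      have h1 := F.apply_symm_apply (⟨x, hxD⟩, r)
      have h2 : ((F.symm (⟨x, hxD⟩, r)).2 : ℝ) = (r : ℝ) :=
        congrArg (fun q : ↥D × ↥(Set.Icc (0:ℝ) 1) => (q.2 : ℝ)) h1
      have h3 : H (y r) ((F.symm (⟨x, hxD⟩, r)).2 : ℝ) = x :=
        congrArg (fun q : ↥D × ↥(Set.Icc (0:ℝ) 1) => (q.1 : Euc d)) h1
      rwa [h2] at h3
    have hyK : ∀ r : ↥(Set.Icc (0:ℝ) 1), (y r : Euc d) ∈ K := by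
      intro r
      have hxr : x ∈ {z | g z + (r : ℝ) * p z = ℓ} ∩ D := ⟨by simp [gx, px0], hxD⟩
      rw [← Hlevel r r.2] at hxr
      obtain ⟨w, hwK, hwx⟩ := hxr
      have : (y r : Euc d) = w :=
        hinj r r.2 (y r) (y r).2 w hwK.2 ((hyH r).trans hwx.symm)
      rw [this]; exact hwK
    have hycont : Continuous fun r : ↥(Set.Icc (0:ℝ) 1) => (y r : Euc d) := by
      exact continuous_subtype_val.comp (continuous_fst.comp
        (F.symm.continuous.comp (continuous_const.prodMk continuous_id)))
    haveI : PreconnectedSpace ↥(Set.Icc (0:ℝ) 1) :=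
      Subtype.preconnectedSpace isPreconnected_Icc
    have hSpre : IsPreconnected (Set.range fun r : ↥(Set.Icc (0:ℝ) 1) => (y r : Euc d)) :=
      isPreconnected_range hycont
    have hya : (y ⟨t, ht⟩ : Euc d) = a :=
      hinj t ht (y ⟨t, ht⟩) (y ⟨t, ht⟩).2 a haD ((hyH ⟨t, ht⟩).trans hax.symm)
    have hya' : (y ⟨s, hs⟩ : Euc d) = a' :=
      hinj s hs (y ⟨s, hs⟩) (y ⟨s, hs⟩).2 a' ha'D ((hyH ⟨s, hs⟩).trans ha'x.symm)
    have hSsub : (Set.range fun r : ↥(Set.Icc (0:ℝ) 1) => (y r : Euc d)) ⊆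
        connectedComponentIn K a :=
      hSpre.subset_connectedComponentIn ⟨⟨t, ht⟩, hya⟩ (Set.range_subset_iff.mpr hyK)
    exact hSsub ⟨⟨s, hs⟩, hya'⟩


end
end

section
/- Let d ≥ 1, ℓ ∈ ℝ, let B ⊆ ℝ^d be compact, and let g, p : ℝ^d → ℝ be continuous. Let H : B × [0,1] → B be continuous, with H(·,t) a homeomorphism of B onto B for each t ∈ [0,1], H(·,0) the identity on B, and H({g ≥ ℓ} ∩ B, t) = {g + tp ≥ ℓ} ∩ B for every t ∈ [0,1]. Assume {g ≥ ℓ} ∩ B has at most finitely many connected components. Let A be a connected component of {g ≥ ℓ} ∩ B and set S := {x ∈ B : |g(x) − ℓ| > |p(x)|}. Then A ∩ S = H(A,1) ∩ S. -/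
open MeasureTheory Filter Set Topology Metric
open scoped ENNReal NNReal

noncomputable section

/-- If an isotopy `H` of the compact set `B` carries `{g ≥ ℓ} ∩ B` onto
`{g + tp ≥ ℓ} ∩ B` for each `t` and `A` is a connected component of `{g ≥ ℓ} ∩ B`, then on
the set `S = {x ∈ B : |g(x) − ℓ| > |p(x)|}` the component `A` agrees with its image
`H(A,1)`. -/
theorem statement_4 (d : ℕ) (hd : 1 ≤ d) (ℓ : ℝ)
    (B : Set (Euc d)) (hB : IsCompact B)
    (g p : Euc d → ℝ) (hg : Continuous g) (hp : Continuous p)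
    (H : Euc d → ℝ → Euc d)
    (Hcont : ContinuousOn (fun q : Euc d × ℝ => H q.1 q.2) (B ×ˢ Set.Icc 0 1))
    (Hhomeo : ∀ t ∈ Set.Icc (0:ℝ) 1, ∃ e : B ≃ₜ B, ∀ x : B, (e x : Euc d) = H x t)
    (Hid : ∀ x ∈ B, H x 0 = x)
    (Hlevel : ∀ t ∈ Set.Icc (0:ℝ) 1,
      (fun x => H x t) '' ({x | ℓ ≤ g x} ∩ B) = {x | ℓ ≤ g x + t * p x} ∩ B)
    (hfin : FinitelyManyComponents d ({x | ℓ ≤ g x} ∩ B))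
    (A : Set (Euc d))
    (hA : ∃ x ∈ {x | ℓ ≤ g x} ∩ B, A = connectedComponentIn ({x | ℓ ≤ g x} ∩ B) x) :
    A ∩ {x ∈ B | |p x| < |g x - ℓ|} =
      ((fun x => H x 1) '' A) ∩ {x ∈ B | |p x| < |g x - ℓ|} := by
  classical
  set K : Set (Euc d) := {x | ℓ ≤ g x} ∩ B with hK
  -- H maps B into B at each time
  have hmemB : ∀ x ∈ B, ∀ t ∈ Set.Icc (0:ℝ) 1, H x t ∈ B := by
    intro x hx t ht
    obtain ⟨e, he⟩ := Hhomeo t ht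
    have := (e ⟨x, hx⟩).2
    rwa [he ⟨x, hx⟩] at this
  -- injectivity of each time slice on B
  have hinj : ∀ t ∈ Set.Icc (0:ℝ) 1, ∀ x ∈ B, ∀ y ∈ B, H x t = H y t → x = y := by
    intro t ht x hx y hy hxy
    obtain ⟨e, he⟩ := Hhomeo t ht
    have : e ⟨x, hx⟩ = e ⟨y, hy⟩ := by
      apply Subtype.ext; rw [he, he]; exact hxy
    have := e.injective this
    exact congrArg Subtype.val this
  -- the joint map (x,t) ↦ (H x t, t) on the compact space B × [0,1]
  haveI : CompactSpace B := isCompact_iff_compactSpace.mp hB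
  let X := B × (Set.Icc (0:ℝ) 1)
  let F : X → X := fun q => (⟨H q.1 q.2, hmemB q.1 q.1.2 q.2 q.2.2⟩, q.2)
  have hFcont : Continuous F := by
    refine Continuous.prodMk ?_ continuous_snd
    refine Continuous.subtype_mk ?_ _
    have hmap : Continuous (fun q : X => ((q.1 : Euc d), (q.2 : ℝ))) :=
      (continuous_subtype_val.comp continuous_fst).prodMk
        (continuous_subtype_val.comp continuous_snd)
    exact Hcont.comp_continuous hmap (fun q => ⟨q.1.2, q.2.2⟩)
  have hFbij : Function.Bijective F := by
    constructor
    · rintro ⟨x, t⟩ ⟨y, s⟩ hxy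
      have h2 : t = s := congrArg Prod.snd hxy
      subst h2
      have h1 : H (x : Euc d) t = H (y : Euc d) t := by
        have := congrArg Prod.fst hxy
        exact congrArg Subtype.val this
      have := hinj t t.2 x x.2 y y.2 h1
      exact Prod.ext (Subtype.ext this) rfl
    · rintro ⟨y, t⟩
      obtain ⟨e, he⟩ := Hhomeo t t.2
      refine ⟨(e.symm y, t), ?_⟩
      refine Prod.ext ?_ rfl
      apply Subtype.ext
      show H (e.symm y : Euc d) t = y
      rw [← he (e.symm y), e.apply_symm_apply]
  let E : X ≃ X := Equiv.ofBijective F hFbij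
  have hEcont : Continuous E := hFcont
  let M : X ≃ₜ X := Continuous.homeoOfEquivCompactToT2 (f := E) hEcont
  -- key construction: a path t ↦ H_t⁻¹ x inside K
  have main : ∀ x, x ∈ B → (∀ t : ℝ, t ∈ Set.Icc (0:ℝ) 1 → ℓ ≤ g x + t * p x) →
      ∃ a ∈ K, H a 1 = x ∧ a ∈ connectedComponentIn K x := by
    intro x hxB hall
    have hxK : x ∈ K := by
      refine ⟨?_, hxB⟩
      have := hall 0 ⟨le_refl 0, zero_le_one⟩
      simpa using this
    set γ : ℝ → Euc d := fun t =>
      ((M.symm (⟨x, hxB⟩, Set.projIcc (0:ℝ) 1 zero_le_one t)).1 : Euc d) with hγ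
    have hγcont : Continuous γ := by
      apply continuous_subtype_val.comp
      apply continuous_fst.comp
      apply M.symm.continuous.comp
      exact continuous_const.prodMk continuous_projIcc
    -- for t ∈ [0,1], H (γ t) t = x and γ t ∈ B
    have hγprop : ∀ t (ht : t ∈ Set.Icc (0:ℝ) 1), γ t ∈ B ∧ H (γ t) t = x := by
      intro t ht
      have hproj : Set.projIcc (0:ℝ) 1 zero_le_one t = ⟨t, ht⟩ := Set.projIcc_of_mem _ ht
      set q : X := M.symm (⟨x, hxB⟩, ⟨t, ht⟩) with hq
      have hMq : M q = (⟨x, hxB⟩, ⟨t, ht⟩) := M.apply_symm_apply _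
      have hMq' : F q = (⟨x, hxB⟩, ⟨t, ht⟩) := hMq
      have hsnd : q.2 = ⟨t, ht⟩ := congrArg Prod.snd hMq'
      have hfst : H (q.1 : Euc d) (q.2 : ℝ) = x := by
        have := congrArg Prod.fst hMq'
        exact congrArg Subtype.val this
      have hγt : γ t = (q.1 : Euc d) := by rw [hγ]; simp only [hproj, hq]
      refine ⟨hγt ▸ q.1.2, ?_⟩
      rw [hγt, ← show ((q.2 : ℝ)) = t from congrArg Subtype.val hsnd ▸ rfl]
      · rw [hsnd] at hfst ⊢; exact hfst
    -- γ t ∈ K for t ∈ [0,1]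
    have hγK : ∀ t, t ∈ Set.Icc (0:ℝ) 1 → γ t ∈ K := by
      intro t ht
      obtain ⟨hγB, hγH⟩ := hγprop t ht
      have hxKt : x ∈ (fun y => H y t) '' K := by
        rw [Hlevel t ht]; exact ⟨hall t ht, hxB⟩
      obtain ⟨a, haK, haH⟩ := hxKt
      have : γ t = a := hinj t ht _ hγB _ haK.2 (hγH.trans haH.symm)
      rwa [this]
    have hγ0 : γ 0 = x := by
      obtain ⟨hγB, hγH⟩ := hγprop 0 ⟨le_refl 0, zero_le_one⟩
      rw [← hγH]; exact (Hid _ hγB).symm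
    have hconn : IsPreconnected (γ '' Set.Icc (0:ℝ) 1) :=
      isPreconnected_Icc.image γ hγcont.continuousOn
    have hsub : γ '' Set.Icc (0:ℝ) 1 ⊆ K := by
      rintro _ ⟨t, ht, rfl⟩; exact hγK t ht
    have hxmem : x ∈ γ '' Set.Icc (0:ℝ) 1 :=
      ⟨0, ⟨le_refl 0, zero_le_one⟩, hγ0⟩
    have hsubcc : γ '' Set.Icc (0:ℝ) 1 ⊆ connectedComponentIn K x :=
      hconn.subset_connectedComponentIn hxmem hsub
    refine ⟨γ 1, hγK 1 ⟨zero_le_one, le_refl 1⟩, (hγprop 1 ⟨zero_le_one, le_refl 1⟩).2, ?_⟩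
    exact hsubcc ⟨1, ⟨zero_le_one, le_refl 1⟩, rfl⟩
  obtain ⟨x0, hx0, hAeq⟩ := hA
  have hAK : A ⊆ K := hAeq ▸ connectedComponentIn_subset K x0
  ext x
  simp only [Set.mem_inter_iff, Set.mem_setOf_eq, Set.mem_image]
  constructor
  · rintro ⟨hxA, hxB, hxS⟩
    have hxgℓ : ℓ ≤ g x := (hAK hxA).1
    have hall : ∀ t : ℝ, t ∈ Set.Icc (0:ℝ) 1 → ℓ ≤ g x + t * p x := by
      intro t ht
      have h1 := neg_abs_le (p x)
      have h2 := abs_nonneg (p x)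
      have h3 : |g x - ℓ| = g x - ℓ := abs_of_nonneg (by linarith)
      rw [h3] at hxS
      nlinarith [ht.1, ht.2]
    obtain ⟨a, haK, haH, hacc⟩ := main x hxB hall
    have hAx : A = connectedComponentIn K x := by
      rw [hAeq]
      exact connectedComponentIn_eq (hAeq ▸ hxA)
    exact ⟨⟨a, hAx ▸ hacc, haH⟩, hxB, hxS⟩
  · rintro ⟨⟨a, haA, haH⟩, hxB, hxS⟩
    have haK : a ∈ K := hAK haA
    have hxK1 : x ∈ {y | ℓ ≤ g y + 1 * p y} ∩ B := by
      rw [← Hlevel 1 ⟨zero_le_one, le_refl 1⟩]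
      exact ⟨a, haK, haH⟩
    have hxgℓ : ℓ ≤ g x := by
      by_contra hlt
      push_neg at hlt
      have h3 : |g x - ℓ| = ℓ - g x := by rw [abs_of_nonpos (by linarith)]; ring
      rw [h3] at hxS
      have h1 := le_abs_self (p x)
      have := hxK1.1
      simp only [Set.mem_setOf_eq, one_mul] at this
      linarith
    have hall : ∀ t : ℝ, t ∈ Set.Icc (0:ℝ) 1 → ℓ ≤ g x + t * p x := by
      intro t ht
      have h1 := neg_abs_le (p x)
      have h2 := abs_nonneg (p x)
      have h3 : |g x - ℓ| = g x - ℓ := abs_of_nonneg (by linarith)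
      rw [h3] at hxS
      nlinarith [ht.1, ht.2]
    obtain ⟨a', ha'K, ha'H, ha'cc⟩ := main x hxB hall
    have haa : a' = a := hinj 1 ⟨zero_le_one, le_refl 1⟩ _ ha'K.2 _ haK.2 (by rw [ha'H, haH])
    have hacc : a ∈ connectedComponentIn K x := haa ▸ ha'cc
    have hAa : A = connectedComponentIn K a := by
      rw [hAeq]
      exact connectedComponentIn_eq (hAeq ▸ haA)
    have hxcc : x ∈ connectedComponentIn K x :=
      mem_connectedComponentIn ⟨hxgℓ, hxB⟩
    have : connectedComponentIn K x = connectedComponentIn K a :=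
      connectedComponentIn_eq hacc
    exact ⟨hAa ▸ this ▸ hxcc, hxB, hxS⟩

end
end

section
/- Let d ≥ 1, ℓ ∈ ℝ, let B := B_w = w + [0,1]^d be a unit cube (w ∈ ℤ^d), and let g, p : ℝ^d → ℝ be continuous. Let H : B × [0,1] → B be continuous, with H(·,t) a homeomorphism of B onto B for each t ∈ [0,1], H(·,0) the identity on B, H({g ≥ ℓ} ∩ B, t) = {g + tp ≥ ℓ} ∩ B for every t ∈ [0,1], and H({g ≥ ℓ}_∞ ∩ B, 1) = {g + p ≥ ℓ}_∞ ∩ B. Assume {g ≥ ℓ} ∩ B has at most finitely many connected components. Then |Leb({g ≥ ℓ}_∞ ∩ B) − Leb({g + p ≥ ℓ}_∞ ∩ B)| ≤ Leb({x ∈ B : |g(x) − ℓ| ≤ |p(x)|}), where Leb denotes d-dimensional Lebesgue measure. -/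
open MeasureTheory Filter Set Topology Metric
open scoped ENNReal NNReal

noncomputable section

lemma isCompact_unitCube (d : ℕ) (v : Fin d → ℤ) : IsCompact (unitCube d v) := by
  have h : unitCube d v =
      (⇑(PiLp.continuousLinearEquiv 2 ℝ (fun _ : Fin d => ℝ)).symm) ''
        (Set.univ.pi fun i => Set.Icc ((v i : ℝ)) ((v i : ℝ) + 1)) := by
    ext x
    constructor
    · intro hx
      exact ⟨fun i => x i, fun i _ => ⟨(hx i).1, (hx i).2⟩, rfl⟩
    · rintro ⟨y, hy, rfl⟩ i
      exact hy i (Set.mem_univ i)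
  rw [h]
  exact (isCompact_univ_pi fun i => isCompact_Icc).image
    (PiLp.continuousLinearEquiv 2 ℝ (fun _ : Fin d => ℝ)).symm.continuous

lemma isCompact_connectedComponentIn {d : ℕ} {G : Set (Euc d)} (hG : IsCompact G)
    (x : Euc d) : IsCompact (connectedComponentIn G x) := by
  by_cases hx : x ∈ G
  · rw [connectedComponentIn_eq_image hx]
    haveI : CompactSpace G := isCompact_iff_compactSpace.mp hG
    exact isClosed_connectedComponent.isCompact.image continuous_subtype_val
  · rw [connectedComponentIn_eq_empty hx]
    exact isCompact_empty

lemma isCompact_saturated {d : ℕ} {G A : Set (Euc d)} (hG : IsCompact G)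
    (hfin : FinitelyManyComponents d G) (hAG : A ⊆ G)
    (hsat : ∀ x ∈ A, connectedComponentIn G x ⊆ A) : IsCompact A := by
  have hA : A = ⋃₀ {C | ∃ x ∈ A, C = connectedComponentIn G x} := by
    apply Set.Subset.antisymm
    · intro x hx
      exact ⟨connectedComponentIn G x, ⟨x, hx, rfl⟩, mem_connectedComponentIn (hAG hx)⟩
    · rintro y ⟨C, ⟨x, hx, rfl⟩, hy⟩
      exact hsat x hx hy
  rw [hA]
  refine Set.Finite.isCompact_sUnion ?_ ?_
  · exact hfin.subset (by rintro C ⟨x, hx, rfl⟩; exact ⟨x, hAG hx, rfl⟩)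
  · rintro C ⟨x, hx, rfl⟩
    exact isCompact_connectedComponentIn hG x

lemma track_clopen {d : ℕ} {K A G : Set (Euc d)} {H : Euc d → ℝ → Euc d}
    (hA : IsCompact A) (hGA : IsCompact (G \ A)) (hAG : A ⊆ G) (hGK : G ⊆ K)
    (Hcont : ContinuousOn (fun q : Euc d × ℝ => H q.1 q.2) (K ×ˢ Set.Icc 0 1))
    (hinj : ∀ t ∈ Set.Icc (0:ℝ) 1, Set.InjOn (fun y => H y t) K)
    {x : Euc d} (hx : ∀ t ∈ Set.Icc (0:ℝ) 1, x ∈ (fun y => H y t) '' G) :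
    (x ∈ (fun y => H y 0) '' A) ↔ (x ∈ (fun y => H y 1) '' A) := by
  have key : ∀ B : Set (Euc d), IsCompact B → B ⊆ G →
      IsCompact {t | t ∈ Set.Icc (0:ℝ) 1 ∧ ∃ a ∈ B, H a t = x} := by
    intro B hB hBG
    have hZ : IsCompact {q : Euc d × ℝ | q ∈ B ×ˢ Set.Icc (0:ℝ) 1 ∧ H q.1 q.2 = x} := by
      have heq : {q : Euc d × ℝ | q ∈ B ×ˢ Set.Icc (0:ℝ) 1 ∧ H q.1 q.2 = x} =
          (B ×ˢ Set.Icc (0:ℝ) 1) ∩ (fun q : Euc d × ℝ => H q.1 q.2) ⁻¹' {x} := by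
        ext q; simp [Set.mem_inter_iff]
      have hcl : IsClosed ((B ×ˢ Set.Icc (0:ℝ) 1) ∩
          (fun q : Euc d × ℝ => H q.1 q.2) ⁻¹' {x}) :=
        ContinuousOn.preimage_isClosed_of_isClosed
          (Hcont.mono (Set.prod_mono (hBG.trans hGK) Set.Subset.rfl))
          (hB.isClosed.prod isClosed_Icc) isClosed_singleton
      rw [heq]
      exact (hB.prod isCompact_Icc).of_isClosed_subset hcl Set.inter_subset_left
    have hTeq : {t | t ∈ Set.Icc (0:ℝ) 1 ∧ ∃ a ∈ B, H a t = x} =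
        Prod.snd '' {q : Euc d × ℝ | q ∈ B ×ˢ Set.Icc (0:ℝ) 1 ∧ H q.1 q.2 = x} := by
      ext t
      constructor
      · rintro ⟨ht, a, ha, hax⟩
        exact ⟨(a, t), ⟨⟨ha, ht⟩, hax⟩, rfl⟩
      · rintro ⟨⟨a, s⟩, ⟨⟨ha, hs⟩, hax⟩, rfl⟩
        exact ⟨hs, a, ha, hax⟩
    rw [hTeq]
    exact hZ.image continuous_snd
  set T : Set ℝ := {t | t ∈ Set.Icc (0:ℝ) 1 ∧ ∃ a ∈ A, H a t = x} with hTdef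
  set T₂ : Set ℝ := {t | t ∈ Set.Icc (0:ℝ) 1 ∧ ∃ a ∈ G \ A, H a t = x} with hT₂def
  have hT : IsCompact T := key A hA hAG
  have hT₂ : IsCompact T₂ := key (G \ A) hGA Set.diff_subset
  have hcover : ∀ t ∈ Set.Icc (0:ℝ) 1, t ∈ T ∨ t ∈ T₂ := by
    intro t ht
    obtain ⟨a, haG, hax⟩ := hx t ht
    by_cases h : a ∈ A
    · exact Or.inl ⟨ht, a, h, hax⟩
    · exact Or.inr ⟨ht, a, ⟨haG, h⟩, hax⟩
  have hdisj : ∀ t, t ∈ T → t ∉ T₂ := by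
    rintro t ⟨ht, a, haA, hax⟩ ⟨-, b, hbB, hbx⟩
    have hab : a = b := hinj t ht (hGK (hAG haA)) (hGK hbB.1) (hax.trans hbx.symm)
    exact hbB.2 (hab ▸ haA)
  haveI : PreconnectedSpace (Set.Icc (0:ℝ) 1) := Subtype.preconnectedSpace isPreconnected_Icc
  set T' : Set (Set.Icc (0:ℝ) 1) := Subtype.val ⁻¹' T with hT'def
  have hT'c : IsClosed T' := hT.isClosed.preimage continuous_subtype_val
  have hcompl : T'ᶜ = Subtype.val ⁻¹' T₂ := by
    ext t
    simp only [Set.mem_compl_iff, Set.mem_preimage, hT'def]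
    constructor
    · intro h
      rcases hcover t t.2 with h1 | h2
      · exact absurd h1 h
      · exact h2
    · intro h2 h1
      exact hdisj t h1 h2
  have hT'o : IsOpen T' := by
    rw [← isClosed_compl_iff, hcompl]
    exact hT₂.isClosed.preimage continuous_subtype_val
  have hall : T'.Nonempty → ∀ s : Set.Icc (0:ℝ) 1, s ∈ T' := by
    intro hne s
    rw [IsClopen.eq_univ ⟨hT'c, hT'o⟩ hne]
    trivial
  have h0 : (0:ℝ) ∈ Set.Icc (0:ℝ) 1 := ⟨le_refl 0, zero_le_one⟩
  have h1 : (1:ℝ) ∈ Set.Icc (0:ℝ) 1 := ⟨zero_le_one, le_refl 1⟩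
  constructor
  · rintro ⟨a, haA, hax⟩
    have hne : T'.Nonempty := ⟨⟨0, h0⟩, h0, a, haA, hax⟩
    obtain ⟨-, b, hbA, hbx⟩ := hall hne ⟨1, h1⟩
    exact ⟨b, hbA, hbx⟩
  · rintro ⟨a, haA, hax⟩
    have hne : T'.Nonempty := ⟨⟨1, h1⟩, h1, a, haA, hax⟩
    obtain ⟨-, b, hbA, hbx⟩ := hall hne ⟨0, h0⟩
    exact ⟨b, hbA, hbx⟩

/-- If an isotopy `H` of the unit cube `B = B_w` carries `{g ≥ ℓ} ∩ B` onto
`{g + tp ≥ ℓ} ∩ B` for each `t` and matches up the unbounded parts at time `1`, then the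
volumes of the unbounded parts inside `B` differ by at most the volume of
`{x ∈ B : |g(x) − ℓ| ≤ |p(x)|}`. -/
theorem statement_5 (d : ℕ) (hd : 1 ≤ d) (ℓ : ℝ) (w : Fin d → ℤ)
    (g p : Euc d → ℝ) (hg : Continuous g) (hp : Continuous p)
    (H : Euc d → ℝ → Euc d)
    (Hcont : ContinuousOn (fun q : Euc d × ℝ => H q.1 q.2)
      (unitCube d w ×ˢ Set.Icc 0 1))
    (Hhomeo : ∀ t ∈ Set.Icc (0:ℝ) 1,
      ∃ e : unitCube d w ≃ₜ unitCube d w, ∀ x : unitCube d w, (e x : Euc d) = H x t)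
    (Hid : ∀ x ∈ unitCube d w, H x 0 = x)
    (Hlevel : ∀ t ∈ Set.Icc (0:ℝ) 1,
      (fun x => H x t) '' ({x | ℓ ≤ g x} ∩ unitCube d w) =
        {x | ℓ ≤ g x + t * p x} ∩ unitCube d w)
    (Hinf : (fun x => H x 1) '' (unboundedPart d {x | ℓ ≤ g x} ∩ unitCube d w) =
      unboundedPart d {x | ℓ ≤ g x + p x} ∩ unitCube d w)
    (hfin : FinitelyManyComponents d ({x | ℓ ≤ g x} ∩ unitCube d w)) :
    |(volume (unboundedPart d {x | ℓ ≤ g x} ∩ unitCube d w)).toReal -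
      (volume (unboundedPart d {x | ℓ ≤ g x + p x} ∩ unitCube d w)).toReal| ≤
      (volume {x ∈ unitCube d w | |g x - ℓ| ≤ |p x|}).toReal := by
  set K := unitCube d w with hKdef
  have hKcomp : IsCompact K := isCompact_unitCube d w
  set F : Set (Euc d) := {x | ℓ ≤ g x} with hFdef
  set F' : Set (Euc d) := {x | ℓ ≤ g x + p x} with hF'def
  set G : Set (Euc d) := F ∩ K with hGdef
  set A : Set (Euc d) := unboundedPart d F ∩ K with hAdef
  set A' : Set (Euc d) := unboundedPart d F' ∩ K with hA'def
  set S : Set (Euc d) := {x ∈ K | |g x - ℓ| ≤ |p x|} with hSdef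
  have hFc : IsClosed F := isClosed_le continuous_const hg
  have hGcomp : IsCompact G := hKcomp.inter_left hFc
  have hAG : A ⊆ G := fun x hx => ⟨hx.1.1, hx.2⟩
  have hGK : G ⊆ K := Set.inter_subset_right
  have hsatA : ∀ x ∈ A, connectedComponentIn G x ⊆ A := by
    rintro x ⟨hxU, hxK⟩ y hy
    have hyG : y ∈ G := connectedComponentIn_subset _ _ hy
    have h1 : y ∈ connectedComponentIn F x :=
      connectedComponentIn_mono x (Set.inter_subset_left) hy
    have h2 : connectedComponentIn F x = connectedComponentIn F y := connectedComponentIn_eq h1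
    exact ⟨⟨hyG.1, fun hb => hxU.2 (h2 ▸ hb)⟩, hyG.2⟩
  have hsatB : ∀ x ∈ G \ A, connectedComponentIn G x ⊆ G \ A := by
    rintro x ⟨hxG, hxA⟩ y hy
    have hyG : y ∈ G := connectedComponentIn_subset _ _ hy
    have h1 : y ∈ connectedComponentIn F x :=
      connectedComponentIn_mono x (Set.inter_subset_left) hy
    have h2 : connectedComponentIn F x = connectedComponentIn F y := connectedComponentIn_eq h1
    refine ⟨hyG, fun hyA => hxA ⟨⟨hxG.1, fun hb => hyA.1.2 (h2 ▸ hb)⟩, hxG.2⟩⟩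
  have hAcomp : IsCompact A := isCompact_saturated hGcomp hfin hAG hsatA
  have hGAcomp : IsCompact (G \ A) := isCompact_saturated hGcomp hfin Set.diff_subset hsatB
  have hinj : ∀ t ∈ Set.Icc (0:ℝ) 1, Set.InjOn (fun y => H y t) K := by
    intro t ht a ha b hb hab
    obtain ⟨e, he⟩ := Hhomeo t ht
    have hea : e ⟨a, ha⟩ = e ⟨b, hb⟩ := Subtype.ext (by rw [he, he]; exact hab)
    exact congrArg Subtype.val (e.injective hea)
  have core : ∀ x ∈ K, |p x| < g x - ℓ → (x ∈ A ↔ x ∈ A') := by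
    intro x hxK hgl
    have hxGt : ∀ t ∈ Set.Icc (0:ℝ) 1, x ∈ (fun y => H y t) '' G := by
      intro t ht
      rw [Hlevel t ht]
      refine ⟨?_, hxK⟩
      show ℓ ≤ g x + t * p x
      nlinarith [abs_nonneg (p x), neg_abs_le (p x), le_abs_self (p x), ht.1, ht.2]
    have htrack := track_clopen hAcomp hGAcomp hAG hGK Hcont hinj hxGt
    constructor
    · intro hxA
      have h0 : x ∈ (fun y => H y 0) '' A := ⟨x, hxA, Hid x hxK⟩
      have h1 := htrack.mp h0
      rwa [Hinf] at h1
    · intro hxA'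
      have h1 : x ∈ (fun y => H y 1) '' A := by rw [Hinf]; exact hxA'
      obtain ⟨a, haA, hax⟩ := htrack.mpr h1
      have hax' : a = x := by rw [← hax]; exact (Hid a (hGK (hAG haA))).symm
      exact hax' ▸ haA
  have hsub1 : A ⊆ A' ∪ S := by
    intro x hxA
    by_cases hS : |g x - ℓ| ≤ |p x|
    · exact Or.inr ⟨hxA.2, hS⟩
    · push_neg at hS
      have hgx : ℓ ≤ g x := hxA.1.1
      have : |p x| < g x - ℓ := by
        rwa [abs_of_nonneg (by linarith : (0:ℝ) ≤ g x - ℓ)] at hS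
      exact Or.inl ((core x hxA.2 this).mp hxA)
  have hsub2 : A' ⊆ A ∪ S := by
    intro x hxA'
    by_cases hS : |g x - ℓ| ≤ |p x|
    · exact Or.inr ⟨hxA'.2, hS⟩
    · push_neg at hS
      have hgx : ℓ ≤ g x + p x := hxA'.1.1
      have hpx : p x ≤ |p x| := le_abs_self (p x)
      have hge : (0:ℝ) ≤ g x - ℓ := by
        by_contra hlt
        push_neg at hlt
        have : |g x - ℓ| = -(g x - ℓ) := abs_of_neg (by linarith)
        linarith [this ▸ hS]
      have : |p x| < g x - ℓ := by rwa [abs_of_nonneg hge] at hS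
      exact Or.inl ((core x hxA'.2 this).mpr hxA')
  have hKfin : volume K < ⊤ := hKcomp.measure_lt_top
  have hA'fin : volume A' ≠ ⊤ := ((measure_mono (Set.inter_subset_right : A' ⊆ K)).trans_lt hKfin).ne
  have hAfin : volume A ≠ ⊤ := ((measure_mono (Set.inter_subset_right : A ⊆ K)).trans_lt hKfin).ne
  have hSfin : volume S ≠ ⊤ :=
    ((measure_mono (fun x hx => hx.1 : S ⊆ K)).trans_lt hKfin).ne
  have h1 : volume A ≤ volume A' + volume S := (measure_mono hsub1).trans (measure_union_le _ _)
  have h2 : volume A' ≤ volume A + volume S := (measure_mono hsub2).trans (measure_union_le _ _)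
  have e1 : (volume A).toReal ≤ (volume A').toReal + (volume S).toReal := by
    have := ENNReal.toReal_mono (ENNReal.add_ne_top.mpr ⟨hA'fin, hSfin⟩) h1
    rwa [ENNReal.toReal_add hA'fin hSfin] at this
  have e2 : (volume A').toReal ≤ (volume A).toReal + (volume S).toReal := by
    have := ENNReal.toReal_mono (ENNReal.add_ne_top.mpr ⟨hAfin, hSfin⟩) h2
    rwa [ENNReal.toReal_add hAfin hSfin] at this
  rw [abs_sub_le_iff]
  constructor <;> linarith

end
end

section
/- Let d ≥ 1, ℓ ∈ ℝ, let B ⊆ ℝ^d be compact, let g, p : B → ℝ and θ : B → [0,1] be continuous, set p̄ := θ·p, and let N ⊆ B be a set with p̄(x) = p(x) for every x ∈ B ∖ N. Assume {g = ℓ} ∩ B has at most finitely many connected components. Let H, H̄ : B × [0,1] → B be continuous maps such that for each t ∈ [0,1], H(·,t) and H̄(·,t) are homeomorphisms of B onto B, H(·,0) and H̄(·,0) are the identity on B, H({g = ℓ} ∩ B, t) = {g + tp = ℓ} ∩ B and H̄({g = ℓ} ∩ B, t) = {g + t·p̄ = ℓ} ∩ B for every t ∈ [0,1]. Then for every connected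 component L of {g = ℓ} ∩ B, one has H̄(L,1) ∖ N = H(L,1) ∖ N. -/
/-!
Pull the orbit `t ↦ H̄(x,t)` back along `H`, at the reparametrised time `t·θ(H̄(x,t))`: since
`H(·,s)` carries `{g = ℓ} ∩ B` onto `{g + s p = ℓ} ∩ B`, this is a path in `{g = ℓ} ∩ B` from `x`
to the `H(·,θ(y))`-preimage of `y = H̄(x,1)`. Off `N` either `θ(y) = 1`, or `p(y) = 0` and then
`y` lies on every level set `{g + s p = ℓ}`, so pulling back the constant path `y` for
`s ∈ [θ(y),1]` stays in the same component and ends at the `H(·,1)`-preimage of `y`. This gives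
`H̄(L,1) ∖ N ⊆ H(L,1) ∖ N`; the reverse inclusion follows by applying it to the `H̄(·,1)`-preimage
of a point of `H(L,1) ∖ N` and using injectivity of `H(·,1)`. The pull-backs are continuous
because `(x,t) ↦ (H(x,t),t)` is a continuous injection of the compact set `B × [0,1]` into a
Hausdorff space.
-/

open MeasureTheory Filter Set Topology Metric
open scoped ENNReal NNReal

noncomputable section

open Function

theorem ContinuousOn.continuousOn_invFunOn_image {X Y : Type*} [TopologicalSpace X]
    [TopologicalSpace Y] [T2Space Y] [Nonempty X] {f : X → Y} {K : Set X} (hK : IsCompact K)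
    (hf : ContinuousOn f K) (hinj : InjOn f K) : ContinuousOn (invFunOn f K) (f '' K) := by
  refine continuousOn_iff_isClosed.2 fun t ht =>
    ⟨f '' (K ∩ t), ((hK.inter_right ht).image_of_continuousOn (hf.mono inter_subset_left)).isClosed,
      ?_⟩
  ext y
  simp only [mem_inter_iff, mem_preimage]
  constructor
  · rintro ⟨hy, z, hz, rfl⟩
    rw [hinj.leftInvOn_invFunOn hz] at hy
    exact ⟨⟨z, ⟨hz, hy⟩, rfl⟩, z, hz, rfl⟩
  · rintro ⟨⟨z, ⟨hz, hzt⟩, rfl⟩, -⟩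
    rw [hinj.leftInvOn_invFunOn hz]
    exact ⟨hzt, z, hz, rfl⟩

theorem Set.injOn_of_equiv {α β : Type*} {s : Set α} {t : Set β} {f : α → β} (e : s ≃ t)
    (he : ∀ x : s, (e x : β) = f x) : InjOn f s := by
  intro a ha b hb hab
  have : e ⟨a, ha⟩ = e ⟨b, hb⟩ := Subtype.ext (by rw [he, he]; exact hab)
  exact congrArg Subtype.val (e.injective this)

theorem exists_mem_connectedComponentIn_of_isotopy_lift {X Y : Type*} [TopologicalSpace X]
    [T2Space X] [TopologicalSpace Y] {B S : Set X} (hB : IsCompact B) (hSB : S ⊆ B)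
    {H : X → ℝ → X} (Hcont : ContinuousOn (fun q : X × ℝ => H q.1 q.2) (B ×ˢ Icc 0 1))
    (Hinj : ∀ t ∈ Icc (0:ℝ) 1, InjOn (H · t) B)
    {J : Set Y} (hJ : IsPreconnected J) {γ : Y → X} {σ : Y → ℝ}
    (hγ : ContinuousOn γ J) (hσ : ContinuousOn σ J) (hσJ : MapsTo σ J (Icc 0 1))
    (hγS : ∀ y ∈ J, γ y ∈ (H · (σ y)) '' S)
    {a b : Y} (ha : a ∈ J) (hb : b ∈ J) {x : X} (hx : x ∈ S) (hxa : H x (σ a) = γ a) :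
    ∃ w ∈ connectedComponentIn S x, H w (σ b) = γ b := by
  have : Nonempty X := ⟨x⟩
  set Φ : X × ℝ → X × ℝ := fun q => (H q.1 q.2, q.2)
  have hΦinj : InjOn Φ (B ×ˢ Icc 0 1) := by
    rintro ⟨w, s⟩ ⟨hw, hs⟩ ⟨w', s'⟩ ⟨hw', -⟩ h
    obtain rfl : s = s' := congrArg Prod.snd h
    exact Prod.ext (Hinj s hs hw hw' (congrArg Prod.fst h)) rfl
  set u : Y → X := fun y => (invFunOn Φ (B ×ˢ Icc 0 1) (γ y, σ y)).1
  have hu : ∀ y ∈ J, ∀ w ∈ S, H w (σ y) = γ y → u y = w := by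
    intro y hy w hw hwy
    have : (γ y, σ y) = Φ (w, σ y) := by rw [← hwy]
    simp only [u, this, hΦinj.leftInvOn_invFunOn (mk_mem_prod (hSB hw) (hσJ hy))]
  have huS : MapsTo u J S := fun y hy => by
    obtain ⟨w, hw, hwy⟩ := hγS y hy
    rw [hu y hy w hw hwy]
    exact hw
  have hu_cont : ContinuousOn u J := by
    refine continuousOn_fst.comp ((ContinuousOn.continuousOn_invFunOn_image
      (hB.prod isCompact_Icc) (Hcont.prodMk continuousOn_snd) hΦinj).comp (hγ.prodMk hσ)
      fun y hy => ?_) (mapsTo_univ _ _)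
    obtain ⟨w, hw, hwy⟩ := hγS y hy
    exact ⟨(w, σ y), mk_mem_prod (hSB hw) (hσJ hy), by rw [← hwy]⟩
  have hcomp : u '' J ⊆ connectedComponentIn S x :=
    (hJ.image u hu_cont).subset_connectedComponentIn ⟨a, ha, hu a ha x hx hxa⟩ huS.image_subset
  obtain ⟨w, hw, hwb⟩ := hγS b hb
  exact ⟨w, hu b hb w hw hwb ▸ hcomp ⟨b, hb, rfl⟩, hwb⟩

theorem mem_image_connectedComponentIn_of_levelCurve {X : Type*} [TopologicalSpace X]
    [T2Space X] {B : Set X} (hB : IsCompact B) {g p θ : X → ℝ} {ℓ : ℝ}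
    (hθ : ContinuousOn θ B) (hθ01 : ∀ x ∈ B, θ x ∈ Icc (0:ℝ) 1)
    {H : X → ℝ → X} (Hcont : ContinuousOn (fun q : X × ℝ => H q.1 q.2) (B ×ˢ Icc 0 1))
    (Hinj : ∀ t ∈ Icc (0:ℝ) 1, InjOn (H · t) B) (Hid : ∀ x ∈ B, H x 0 = x)
    (Hlevel : ∀ t ∈ Icc (0:ℝ) 1,
      (H · t) '' ({x | g x = ℓ} ∩ B) = {x ∈ B | g x + t * p x = ℓ})
    {c : ℝ → X} (hc : ContinuousOn c (Icc 0 1))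
    (hcB : ∀ t ∈ Icc (0:ℝ) 1, c t ∈ {x ∈ B | g x + t * (θ x * p x) = ℓ})
    (hagree : θ (c 1) * p (c 1) = p (c 1)) :
    c 1 ∈ (H · 1) '' connectedComponentIn ({x | g x = ℓ} ∩ B) (c 0) := by
  set S := {x | g x = ℓ} ∩ B
  have h1 : (1:ℝ) ∈ Icc (0:ℝ) 1 := right_mem_Icc.2 zero_le_one
  have hpull : ∀ s ∈ Icc (0:ℝ) 1, ∀ z ∈ B, g z + s * p z = ℓ → z ∈ (H · s) '' S :=
    fun s hs z hz hzs => by rw [Hlevel s hs]; exact ⟨hz, hzs⟩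
  set y := c 1
  have hθy := hθ01 y (hcB 1 h1).1
  have hc0 : c 0 ∈ S :=
    have h0 := hcB 0 (left_mem_Icc.2 zero_le_one)
    ⟨by simpa using h0.2, h0.1⟩
  have hσ : MapsTo (fun t => t * θ (c t)) (Icc 0 1) (Icc 0 1) := fun t ht =>
    have hθt := hθ01 _ (hcB t ht).1
    ⟨mul_nonneg ht.1 hθt.1, mul_le_one₀ ht.2 hθt.1 hθt.2⟩
  obtain ⟨w₁, hw₁, hw₁y⟩ := exists_mem_connectedComponentIn_of_isotopy_lift hB inter_subset_right
    Hcont Hinj isPreconnected_Icc hc (continuousOn_id.mul (hθ.comp hc fun t ht => (hcB t ht).1))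
    hσ (fun t ht => hpull _ (hσ ht) _ (hcB t ht).1 (by rw [mul_assoc]; exact (hcB t ht).2))
    (left_mem_Icc.2 zero_le_one) h1 hc0 (by simp [Hid _ hc0.2])
  have hy_const : ∀ s ∈ Icc (θ y) 1, s * p y = θ y * p y := by
    intro s hs
    rcases mul_eq_zero.1 (show (θ y - 1) * p y = 0 by linarith [sub_mul (θ y) 1 (p y)]) with h | h
    · rw [show s = θ y by linarith [hs.1, hs.2]]
    · rw [h, mul_zero, mul_zero]
  obtain ⟨w₂, hw₂, hw₂y⟩ := exists_mem_connectedComponentIn_of_isotopy_lift hB inter_subset_right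
    Hcont Hinj isPreconnected_Icc (γ := fun _ => y) continuousOn_const continuousOn_id
    (fun s hs => ⟨hθy.1.trans hs.1, hs.2⟩)
    (fun s hs => hpull s ⟨hθy.1.trans hs.1, hs.2⟩ y (hcB 1 h1).1
      (by rw [hy_const s hs]; simpa using (hcB 1 h1).2))
    (left_mem_Icc.2 hθy.2) (right_mem_Icc.2 hθy.2) (connectedComponentIn_subset _ _ hw₁)
    (by simpa using hw₁y)
  exact ⟨w₂, connectedComponentIn_eq hw₁ ▸ hw₂, hw₂y⟩

theorem statement_9_general (d : ℕ) (ℓ : ℝ)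
    (B : Set (Euc d)) (hB : IsCompact B)
    (g p θ : Euc d → ℝ)
    (hθ : ContinuousOn θ B)
    (hθ01 : ∀ x ∈ B, θ x ∈ Set.Icc (0:ℝ) 1)
    (N : Set (Euc d))
    (hagree : ∀ x ∈ B \ N, θ x * p x = p x)
    (H Hbar : Euc d → ℝ → Euc d)
    (Hcont : ContinuousOn (fun q : Euc d × ℝ => H q.1 q.2) (B ×ˢ Set.Icc 0 1))
    (Hbarcont : ContinuousOn (fun q : Euc d × ℝ => Hbar q.1 q.2) (B ×ˢ Set.Icc 0 1))
    (Hhomeo : ∀ t ∈ Set.Icc (0:ℝ) 1, ∃ e : B ≃ₜ B, ∀ x : B, (e x : Euc d) = H x t)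
    (Hid : ∀ x ∈ B, H x 0 = x) (Hbarid : ∀ x ∈ B, Hbar x 0 = x)
    (Hlevel : ∀ t ∈ Set.Icc (0:ℝ) 1,
      (fun x => H x t) '' ({x | g x = ℓ} ∩ B) = {x ∈ B | g x + t * p x = ℓ})
    (Hbarlevel : ∀ t ∈ Set.Icc (0:ℝ) 1,
      (fun x => Hbar x t) '' ({x | g x = ℓ} ∩ B) = {x ∈ B | g x + t * (θ x * p x) = ℓ})
    (L : Set (Euc d))
    (hL : ∃ x ∈ {x | g x = ℓ} ∩ B, L = connectedComponentIn ({x | g x = ℓ} ∩ B) x) :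
    ((fun x => Hbar x 1) '' L) \ N = ((fun x => H x 1) '' L) \ N := by
  obtain ⟨x₀, -, rfl⟩ := hL
  set S := {x | g x = ℓ} ∩ B
  have h1 : (1:ℝ) ∈ Icc (0:ℝ) 1 := right_mem_Icc.2 zero_le_one
  have Hinj : ∀ t ∈ Icc (0:ℝ) 1, InjOn (H · t) B := fun t ht =>
    let ⟨e, he⟩ := Hhomeo t ht
    injOn_of_equiv e.toEquiv he
  have hkey : ∀ x ∈ S, Hbar x 1 ∉ N → Hbar x 1 ∈ (H · 1) '' connectedComponentIn S x := by
    intro x hx hxN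
    have hc : ∀ t ∈ Icc (0:ℝ) 1, Hbar x t ∈ {z ∈ B | g z + t * (θ z * p z) = ℓ} :=
      fun t ht => (Hbarlevel t ht).subset ⟨x, hx, rfl⟩
    have := mem_image_connectedComponentIn_of_levelCurve hB hθ hθ01 Hcont Hinj Hid Hlevel
      (c := fun t => Hbar x t)
      (Hbarcont.comp (Continuous.continuousOn (by fun_prop)) fun t ht => mk_mem_prod hx.2 ht) hc
      (hagree _ ⟨(hc 1 h1).1, hxN⟩)
    rwa [Hbarid x hx.2] at this
  ext y
  constructor
  · rintro ⟨⟨x, hx, rfl⟩, hyN⟩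
    rw [connectedComponentIn_eq hx]
    exact ⟨hkey x (connectedComponentIn_subset _ _ hx) hyN, hyN⟩
  · rintro ⟨⟨x, hx, rfl⟩, hyN⟩
    have hxS : x ∈ S := connectedComponentIn_subset _ _ hx
    obtain ⟨hyB, hy⟩ : H x 1 ∈ {z ∈ B | g z + 1 * p z = ℓ} :=
      (Hlevel 1 h1).subset ⟨x, hxS, rfl⟩
    obtain ⟨x', hx'S, hx'⟩ : H x 1 ∈ (Hbar · 1) '' S := by
      rw [Hbarlevel 1 h1]
      exact ⟨hyB, by rwa [hagree _ ⟨hyB, hyN⟩]⟩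
    obtain ⟨w, hw, hwx⟩ := hkey x' hx'S (by rwa [show Hbar x' 1 = H x 1 from hx'])
    obtain rfl : w = x :=
      Hinj 1 h1 (connectedComponentIn_subset _ _ hw).2 hxS.2 (hwx.trans hx')
    refine ⟨⟨x', ?_, hx'⟩, hyN⟩
    rw [connectedComponentIn_eq hx, ← connectedComponentIn_eq hw]
    exact mem_connectedComponentIn hx'S

/-- If `p̄ = θ·p` agrees with `p` off a set `N`, and `H`, `H̄` are isotopies
of the compact set `B` carrying `{g = ℓ} ∩ B` onto `{g + tp = ℓ} ∩ B` and onto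
`{g + tp̄ = ℓ} ∩ B` respectively, then for every connected component `L` of `{g = ℓ} ∩ B`
the time-one images agree off `N`. -/
theorem statement_9 (d : ℕ) (hd : 1 ≤ d) (ℓ : ℝ)
    (B : Set (Euc d)) (hB : IsCompact B)
    (g p θ : Euc d → ℝ)
    (hg : ContinuousOn g B) (hp : ContinuousOn p B) (hθ : ContinuousOn θ B)
    (hθ01 : ∀ x ∈ B, θ x ∈ Set.Icc (0:ℝ) 1)
    (N : Set (Euc d)) (hN : N ⊆ B)
    (hagree : ∀ x ∈ B \ N, θ x * p x = p x)
    (hfin : FinitelyManyComponents d ({x | g x = ℓ} ∩ B))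
    (H Hbar : Euc d → ℝ → Euc d)
    (Hcont : ContinuousOn (fun q : Euc d × ℝ => H q.1 q.2) (B ×ˢ Set.Icc 0 1))
    (Hbarcont : ContinuousOn (fun q : Euc d × ℝ => Hbar q.1 q.2) (B ×ˢ Set.Icc 0 1))
    (Hhomeo : ∀ t ∈ Set.Icc (0:ℝ) 1, ∃ e : B ≃ₜ B, ∀ x : B, (e x : Euc d) = H x t)
    (Hbarhomeo : ∀ t ∈ Set.Icc (0:ℝ) 1, ∃ e : B ≃ₜ B, ∀ x : B, (e x : Euc d) = Hbar x t)
    (Hid : ∀ x ∈ B, H x 0 = x) (Hbarid : ∀ x ∈ B, Hbar x 0 = x)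
    (Hlevel : ∀ t ∈ Set.Icc (0:ℝ) 1,
      (fun x => H x t) '' ({x | g x = ℓ} ∩ B) = {x ∈ B | g x + t * p x = ℓ})
    (Hbarlevel : ∀ t ∈ Set.Icc (0:ℝ) 1,
      (fun x => Hbar x t) '' ({x | g x = ℓ} ∩ B) = {x ∈ B | g x + t * (θ x * p x) = ℓ})
    (L : Set (Euc d))
    (hL : ∃ x ∈ {x | g x = ℓ} ∩ B, L = connectedComponentIn ({x | g x = ℓ} ∩ B) x) :
    ((fun x => Hbar x 1) '' L) \ N = ((fun x => H x 1) '' L) \ N :=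
  statement_9_general d ℓ B hB g p θ hθ hθ01 N hagree H Hbar Hcont Hbarcont Hhomeo Hid Hbarid Hlevel
    Hbarlevel L hL

end
end

section
/- Let (Ω, 𝒜, P) be a probability space, let ℱ⁻ ⊆ 𝒜 be a sub-σ-algebra, and let (𝒢_m)_{m∈ℕ} be an increasing sequence of sub-σ-algebras of 𝒜. Let A ∈ σ(ℱ⁻ ∪ ⋃_{m∈ℕ} 𝒢_m) and suppose that for every m ∈ ℕ, E[1_A | σ(ℱ⁻ ∪ 𝒢_m)] = E[1_A | ℱ⁻] almost surely. Then 1_A = E[1_A | ℱ⁻] almost surely; in particular, A coincides up to a P-null set with an ℱ⁻-measurable set. -/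
open MeasureTheory Filter

namespace MeasureTheory

variable {Ω : Type*} {m0 : MeasurableSpace Ω} {μ : Measure Ω}

theorem ae_eq_of_forall_condExp_ae_eq [IsFiniteMeasure μ] {ℱ : Filtration ℕ m0} {f g : Ω → ℝ}
    (hf : Integrable f μ) (hfm : StronglyMeasurable[⨆ n, ℱ n] f)
    (hcond : ∀ n, μ[f | ℱ n] =ᵐ[μ] g) : f =ᵐ[μ] g := by
  filter_upwards [hf.tendsto_ae_condExp hfm, ae_all_iff.2 hcond] with x hlim hx
  exact tendsto_nhds_unique hlim (tendsto_const_nhds.congr fun n => (hx n).symm)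

theorem exists_measurableSet_ae_eq_of_indicator_ae_eq {β : Type*} [Zero β] [One β]
    [NeZero (1 : β)] [MeasurableSpace β] [MeasurableSingletonClass β] {m : MeasurableSpace Ω}
    {A : Set Ω} {f : Ω → β} (hf : Measurable[m] f) (hA : A.indicator (fun _ => 1) =ᵐ[μ] f) :
    ∃ B, MeasurableSet[m] B ∧ A =ᵐ[μ] B := by
  have hA_preimage : A.indicator (fun _ => (1 : β)) ⁻¹' {1} = A := by
    ext x
    by_cases hx : x ∈ A <;> simp [hx]
  exact ⟨f ⁻¹' {1}, hf (measurableSet_singleton 1), hA_preimage ▸ hA.preimage {1}⟩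

end MeasureTheory

/-- A generalised Kolmogorov zero–one argument: if `A` is measurable with
respect to `σ(ℱ⁻ ∪ ⋃ₘ 𝒢ₘ)` and conditioning on `σ(ℱ⁻ ∪ 𝒢ₘ)` gives no more information
about `A` than conditioning on `ℱ⁻`, then `1_A` equals `E[1_A | ℱ⁻]` almost surely; in
particular, `A` agrees with an `ℱ⁻`-measurable set up to a null set. -/
theorem statement_11 {Ω : Type*} {𝒜 : MeasurableSpace Ω}
    (P : Measure Ω) [IsProbabilityMeasure P]
    (Fm : MeasurableSpace Ω) (hFm : Fm ≤ 𝒜)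
    (G : ℕ → MeasurableSpace Ω) (hG : ∀ m, G m ≤ 𝒜) (hGmono : Monotone G)
    (A : Set Ω) (hA : MeasurableSet[Fm ⊔ ⨆ m, G m] A)
    (hcond : ∀ m : ℕ,
      P[A.indicator (fun _ => (1 : ℝ)) | Fm ⊔ G m]
        =ᵐ[P] P[A.indicator (fun _ => (1 : ℝ)) | Fm]) :
    A.indicator (fun _ => (1 : ℝ)) =ᵐ[P] P[A.indicator (fun _ => (1 : ℝ)) | Fm] ∧
    ∃ B : Set Ω, MeasurableSet[Fm] B ∧ P ((A \ B) ∪ (B \ A)) = 0 := by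
  let ℱ : Filtration ℕ 𝒜 := Filtration.const ℕ Fm hFm ⊔ ⟨G, hGmono, hG⟩
  have hℱ : ⨆ n, ℱ n = Fm ⊔ ⨆ m, G m := (sup_iSup ..).symm
  have hAm : MeasurableSet[𝒜] A := sup_le hFm (iSup_le hG) _ hA
  have h_indicator : A.indicator (fun _ => (1 : ℝ)) =ᵐ[P] P[A.indicator (fun _ => 1) | Fm] :=
    ae_eq_of_forall_condExp_ae_eq (ℱ := ℱ) ((integrable_const 1).indicator hAm)
      (hℱ ▸ stronglyMeasurable_const.indicator hA) hcond
  obtain ⟨B, hB, hAB⟩ := exists_measurableSet_ae_eq_of_indicator_ae_eq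
    stronglyMeasurable_condExp.measurable h_indicator
  exact ⟨h_indicator, B, hB, measure_symmDiff_eq_zero_iff.2 hAB⟩
end

section
/- Let d ≥ 1, β > d and c > 0, and let q : ℝ^d → ℝ be a bounded C¹ function with bounded gradient satisfying max(|q(x)|, |∇q(x)|) ≤ c·|x|^{−β} for all x with |x| ≥ 1. Fix a real m ≥ 1 and define ρ : ℝ^d → ℝ by ρ(x) := ∫_{Λ_m} q(x − y) dy. Then ρ is C¹, and there exists a constant C > 0, depending only on c, β and d, such that for every x ∈ ℝ^d with dist(x, Λ_m) ≥ 1, max(|ρ(x)|, |∇ρ(x)|) ≤ C·dist(x, Λ_m)^{d−β}. -/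
/-!
Since `Λ_m` is compact and `q` is `C¹`, one may differentiate under the integral sign:
`ρ` is `C¹` with `Dρ(x) = ∫_{Λ_m} Dq(x - y) dy`. If `dist(x, Λ_m) = D ≥ 1`, then
`|x - y| ≥ D ≥ 1` for `y ∈ Λ_m`, so both `|ρ(x)|` and `|∇ρ(x)|` are at most
`c ∫_{|z| ≥ D} |z|^{-β} dz`, which polar coordinates evaluate to
`c · d |B_1| / (β - d) · D^{d-β}`.
-/

open MeasureTheory Filter Set Topology Metric
open scoped ENNReal NNReal

noncomputable section

open Module

theorem bigCube_eq_preimage_pi (d : ℕ) (r : ℝ) :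
    bigCube d r = EuclideanSpace.equiv (Fin d) ℝ ⁻¹' univ.pi fun _ => Icc (-r) r := by
  ext x
  simp only [bigCube, abs_le, mem_preimage, mem_univ_pi, mem_Icc]
  rfl

theorem isCompact_bigCube (d : ℕ) (r : ℝ) : IsCompact (bigCube d r) := by
  rw [bigCube_eq_preimage_pi]
  exact (EuclideanSpace.equiv (Fin d) ℝ).toHomeomorph.isCompact_preimage.2
    (isCompact_univ_pi fun _ => isCompact_Icc)

theorem norm_gradient {𝕜 F : Type*} [RCLike 𝕜] [NormedAddCommGroup F] [InnerProductSpace 𝕜 F]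
    [CompleteSpace F] (f : F → 𝕜) (x : F) : ‖gradient f x‖ = ‖fderiv 𝕜 f x‖ :=
  (InnerProductSpace.toDual 𝕜 F).symm.norm_map _

section Smoothing

variable {E F : Type*} [NormedAddCommGroup E] [NormedSpace ℝ E] [FiniteDimensional ℝ E]
  [MeasurableSpace E] [BorelSpace E] [NormedAddCommGroup F] [NormedSpace ℝ F]
  {μ : Measure E} [IsFiniteMeasureOnCompacts μ] {S : Set E} {q : E → F}

theorem hasFDerivAt_setIntegral_comp_sub (hS : IsCompact S) (hq : ContDiff ℝ 1 q) (x₀ : E) :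
    HasFDerivAt (fun x => ∫ y in S, q (x - y) ∂μ) (∫ y in S, fderiv ℝ q (x₀ - y) ∂μ) x₀ := by
  have hq' : Continuous (fderiv ℝ q) := hq.continuous_fderiv one_ne_zero
  obtain ⟨M, hM⟩ : ∃ M, ∀ z ∈ (fun p : E × E => p.1 - p.2) '' (closedBall x₀ 1 ×ˢ S),
      ‖fderiv ℝ q z‖ ≤ M :=
    ((isCompact_closedBall x₀ 1).prod hS |>.image continuous_sub).exists_bound_of_continuousOn
      hq'.continuousOn
  refine hasFDerivAt_integral_of_dominated_of_fderiv_le (μ := μ.restrict S) (𝕜 := ℝ)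
    (F := fun x y => q (x - y)) (F' := fun x y => fderiv ℝ q (x - y)) (bound := fun _ => M)
    (ball_mem_nhds x₀ one_pos) (Eventually.of_forall fun x => ?_) ?_ ?_ ?_ ?_ ?_
  · exact (hq.continuous.comp (continuous_sub_left x)).aestronglyMeasurable
  · exact (hq.continuous.comp (continuous_sub_left x₀)).continuousOn.integrableOn_compact hS
  · exact (hq'.comp (continuous_sub_left x₀)).aestronglyMeasurable
  · refine (ae_restrict_iff' hS.measurableSet).2 (ae_of_all _ fun y hy x hx => hM _ ?_)
    exact ⟨(x, y), ⟨ball_subset_closedBall hx, hy⟩, rfl⟩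
  · exact integrableOn_const hS.measure_lt_top.ne
  · refine ae_of_all _ fun y x _ => ?_
    simpa [Function.comp_def] using ((hq.differentiable one_ne_zero) (x - y)).hasFDerivAt.comp x
      ((hasFDerivAt_id x).sub_const y)

theorem contDiff_setIntegral_comp_sub [CompleteSpace F] (hS : IsCompact S) (hq : ContDiff ℝ 1 q) :
    ContDiff ℝ 1 (fun x => ∫ y in S, q (x - y) ∂μ) := by
  have hderiv := hasFDerivAt_setIntegral_comp_sub (μ := μ) hS hq
  refine contDiff_one_iff_fderiv.2 ⟨fun x => (hderiv x).differentiableAt, ?_⟩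
  rw [funext fun x => (hderiv x).fderiv]
  exact continuous_parametric_integral_of_continuous (f := fun x y => fderiv ℝ q (x - y))
    ((hq.continuous_fderiv one_ne_zero).comp continuous_sub) hS

end Smoothing

section Radial

variable {n : ℕ} {β D : ℝ}

theorem eqOn_pow_smul_indicator_Ici_rpow (hn : 1 ≤ n) :
    EqOn (fun r => r ^ (n - 1) • (Ici D).indicator (fun r => r ^ (-β)) r)
      ((Ici D).indicator fun r => r ^ ((n : ℝ) - 1 - β)) (Ioi 0) := by
  intro r (hr : 0 < r)
  by_cases hrD : r ∈ Ici D
  · simp only [indicator_of_mem hrD, smul_eq_mul]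
    rw [← Real.rpow_natCast, ← Real.rpow_add hr, Nat.cast_sub hn, Nat.cast_one]
    ring_nf
  · simp [indicator_of_notMem hrD]

theorem integrableOn_pow_smul_indicator_Ici_rpow (hn : 1 ≤ n) (hβ : (n : ℝ) < β) (hD : 0 < D) :
    IntegrableOn (fun r => r ^ (n - 1) • (Ici D).indicator (fun r => r ^ (-β)) r) (Ioi 0) := by
  refine (integrableOn_congr_fun (eqOn_pow_smul_indicator_Ici_rpow hn) measurableSet_Ioi).2 ?_
  have hD' : IntegrableOn (fun r : ℝ => r ^ ((n : ℝ) - 1 - β)) (Ici D) :=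
    (integrableOn_Ici_iff_integrableOn_Ioi).2 (integrableOn_Ioi_rpow_of_lt (by linarith) hD)
  exact (hD'.integrable_indicator measurableSet_Ici).integrableOn

theorem integral_pow_smul_indicator_Ici_rpow (hn : 1 ≤ n) (hβ : (n : ℝ) < β) (hD : 0 < D) :
    ∫ r in Ioi 0, r ^ (n - 1) • (Ici D).indicator (fun r => r ^ (-β)) r =
      D ^ ((n : ℝ) - β) / (β - n) := by
  rw [setIntegral_congr_fun measurableSet_Ioi (eqOn_pow_smul_indicator_Ici_rpow hn),
    setIntegral_indicator measurableSet_Ici, inter_eq_self_of_subset_right (Ici_subset_Ioi.2 hD),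
    integral_Ici_eq_integral_Ioi, integral_Ioi_rpow_of_lt (by linarith) hD,
    show (n : ℝ) - 1 - β + 1 = n - β by ring, neg_div, ← div_neg, neg_sub]

variable {E F : Type*} [NormedAddCommGroup E] [NormedSpace ℝ E] [FiniteDimensional ℝ E]
  [Nontrivial E] [MeasurableSpace E] [BorelSpace E] (μ : Measure E) [μ.IsAddHaarMeasure]

theorem integrableOn_norm_rpow_neg (hβ : (finrank ℝ E : ℝ) < β) (hD : 0 < D) :
    IntegrableOn (fun z => ‖z‖ ^ (-β)) {z : E | D ≤ ‖z‖} μ :=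
  (integrable_indicator_iff (measurableSet_le measurable_const measurable_norm)).1 <|
    (integrable_fun_norm_addHaar μ (f := (Ici D).indicator fun r => r ^ (-β))).2
      (integrableOn_pow_smul_indicator_Ici_rpow finrank_pos hβ hD)

theorem setIntegral_norm_rpow_neg (hβ : (finrank ℝ E : ℝ) < β) (hD : 0 < D) :
    ∫ z in {z : E | D ≤ ‖z‖}, ‖z‖ ^ (-β) ∂μ =
      finrank ℝ E * μ.real (ball 0 1) / (β - finrank ℝ E) * D ^ ((finrank ℝ E : ℝ) - β) := by
  rw [← integral_indicator (measurableSet_le measurable_const measurable_norm)]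
  refine (integral_fun_norm_addHaar μ ((Ici D).indicator fun r => r ^ (-β))).trans ?_
  rw [integral_pow_smul_indicator_Ici_rpow finrank_pos hβ hD, nsmul_eq_mul, smul_eq_mul]
  ring

theorem norm_setIntegral_le_of_norm_le_mul_rpow [NormedAddCommGroup F] [NormedSpace ℝ F]
    (hβ : (finrank ℝ E : ℝ) < β) (hD : 0 < D) {c : ℝ} (hc : 0 ≤ c) {S : Set E}
    (hS : MeasurableSet S) {x : E} (hxS : ∀ y ∈ S, D ≤ ‖x - y‖) {g : E → F}
    (hg : ∀ y ∈ S, ‖g y‖ ≤ c * ‖x - y‖ ^ (-β)) :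
    ‖∫ y in S, g y ∂μ‖ ≤
      c * (finrank ℝ E * μ.real (ball 0 1) / (β - finrank ℝ E)) * D ^ ((finrank ℝ E : ℝ) - β) := by
  have hA : MeasurableSet {z : E | D ≤ ‖z‖} := measurableSet_le measurable_const measurable_norm
  set φ := {z : E | D ≤ ‖z‖}.indicator fun z => ‖z‖ ^ (-β)
  have hφ : Integrable (fun y => c * φ (x - y)) μ := by
    have h := (integrable_indicator_iff hA).2 (integrableOn_norm_rpow_neg μ hβ hD)
    exact (h.comp_sub_left x).const_mul c
  calc ‖∫ y in S, g y ∂μ‖ ≤ ∫ y in S, c * φ (x - y) ∂μ := by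
        refine norm_integral_le_of_norm_le hφ.integrableOn ((ae_restrict_iff' hS).2 ?_)
        refine ae_of_all _ fun y hy => ?_
        simpa only [φ, indicator_of_mem (show x - y ∈ {z : E | D ≤ ‖z‖} from hxS y hy)]
          using hg y hy
    _ ≤ ∫ y, c * φ (x - y) ∂μ :=
        setIntegral_le_integral hφ (ae_of_all _ fun y => mul_nonneg hc
          (indicator_nonneg (fun z _ => Real.rpow_nonneg (norm_nonneg z) _) _))
    _ = c * ∫ z, φ z ∂μ := by rw [integral_const_mul, integral_sub_left_eq_self]
    _ = _ := by rw [integral_indicator hA, setIntegral_norm_rpow_neg μ hβ hD, mul_assoc]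

end Radial

/-- If `q` is a bounded `C¹` function with bounded gradient decaying like
`|x|^{−β}` (β > d), then `ρ := q ∗ 1_{Λ_m}` is `C¹` and, with a constant `C` depending only
on `c`, `β` and `d`, satisfies `max(|ρ(x)|, |∇ρ(x)|) ≤ C·dist(x, Λ_m)^{d−β}` whenever
`dist(x, Λ_m) ≥ 1`. -/
theorem statement_16 (d : ℕ) (hd : 1 ≤ d) (β c : ℝ) (hβ : (d : ℝ) < β) (hc : 0 < c) :
    ∃ C : ℝ, 0 < C ∧
      ∀ (q : Euc d → ℝ) (m : ℝ), 1 ≤ m →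
        ContDiff ℝ 1 q →
        (∃ M : ℝ, ∀ x : Euc d, |q x| ≤ M ∧ ‖gradient q x‖ ≤ M) →
        (∀ x : Euc d, 1 ≤ ‖x‖ → max |q x| ‖gradient q x‖ ≤ c * ‖x‖ ^ (-β)) →
        ContDiff ℝ 1 (fun x : Euc d => ∫ y in bigCube d m, q (x - y)) ∧
        ∀ x : Euc d, 1 ≤ Metric.infDist x (bigCube d m) →
          max |∫ y in bigCube d m, q (x - y)|
              ‖gradient (fun z : Euc d => ∫ y in bigCube d m, q (z - y)) x‖ ≤
            C * Metric.infDist x (bigCube d m) ^ ((d : ℝ) - β) := by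
  have : Nontrivial (Euc d) := nontrivial_of_finrank_pos (by rwa [finrank_euclideanSpace_fin])
  have hball : 0 < volume.real (ball (0 : Euc d) 1) :=
    ENNReal.toReal_pos (measure_ball_pos _ _ one_pos).ne' measure_ball_lt_top.ne
  have hβ' : (finrank ℝ (Euc d) : ℝ) < β := by rwa [finrank_euclideanSpace_fin]
  refine ⟨c * (d * volume.real (ball (0 : Euc d) 1) / (β - d)), ?_, ?_⟩
  · have : (0 : ℝ) < d := by exact_mod_cast hd
    have : 0 < β - d := sub_pos.2 hβ
    positivity
  intro q m _ hq _ hdecay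
  have hS := isCompact_bigCube d m
  refine ⟨contDiff_setIntegral_comp_sub hS hq, fun x hx => ?_⟩
  have hxS : ∀ y ∈ bigCube d m, infDist x (bigCube d m) ≤ ‖x - y‖ := fun y hy =>
    dist_eq_norm x y ▸ infDist_le_dist_of_mem hy
  have hdecay' : ∀ y ∈ bigCube d m, max |q (x - y)| ‖gradient q (x - y)‖ ≤ c * ‖x - y‖ ^ (-β) :=
    fun y hy => hdecay _ (hx.trans (hxS y hy))
  have hD : 0 < infDist x (bigCube d m) := one_pos.trans_le hx
  refine max_le ?_ ?_
  · have h := norm_setIntegral_le_of_norm_le_mul_rpow volume hβ' hD hc.le hS.measurableSet hxS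
      (g := fun y => q (x - y)) fun y hy => (le_max_left _ _).trans (hdecay' y hy)
    rwa [finrank_euclideanSpace_fin] at h
  · rw [norm_gradient, (hasFDerivAt_setIntegral_comp_sub hS hq x).fderiv]
    have h := norm_setIntegral_le_of_norm_le_mul_rpow volume hβ' hD hc.le hS.measurableSet hxS
      fun y hy => (norm_gradient q (x - y)).symm.trans_le ((le_max_right _ _).trans (hdecay' y hy))
    rwa [finrank_euclideanSpace_fin] at h
end
end
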